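/- arXiv:2310.12000 — 4 statements merged into one kernel-verified Lean document; each statement's English description precedes it below -/
import Mathlib

section
/- Let $B \in \mathbb{R}^{n\times n}$ be an invertible lower-triangular matrix with unit diagonal, and let $D, W \in \mathbb{R}^{n\times n}$ be diagonal matrices with strictly positive diagonal entries $D_i$ and $W_{ii}$. Define $\tilde\Sigma^{-1} = B^T D^{-1} B$ and the VADU preconditioner square-root factor $P^{1/2} = B^T (W + D^{-1})^{1/2}$ (so that $P = P^{1/2} P^{T/2} = B^T (W+D^{-1}) B$). Then $P^{-1/2}\,(W + \tilde\Sigma^{-1})\,P^{-T/2} = (W + D^{-1})^{-1/2} B^{-T} W B^{-1} (W + D^{-1})^{-1/2} + (D W + I_n)^{-1}$, where $I_n$ is the $n\times n$ identity matrix. -/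
open Matrix

/-!
With `S = (W + D⁻¹)^{1/2}` we have `P^{1/2} = Bᵀ S`, so `P^{-1/2} = S⁻¹ B⁻ᵀ`, and conjugating
`W + Bᵀ D⁻¹ B` by it splits into the `W`-term and `S⁻¹ D⁻¹ S⁻¹`, in which the factors `B` cancel.
The latter is diagonal with entries `1 / (dᵢ (wᵢ + dᵢ⁻¹)) = 1 / (dᵢ wᵢ + 1)`.
-/

namespace Matrix

variable {n α : Type*} [Fintype n] [DecidableEq n]

theorem inv_diagonal_of_ne_zero [Field α] {v : n → α} (hv : ∀ i, v i ≠ 0) :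
    (diagonal v)⁻¹ = diagonal fun i => (v i)⁻¹ := by
  refine inv_eq_right_inv ?_
  rw [diagonal_mul_diagonal, ← diagonal_one]
  exact congrArg diagonal (funext fun i => mul_inv_cancel₀ (hv i))

theorem inv_mul_add_mul_inv_transpose_of_transpose_eq [CommRing α] {B S W M : Matrix n n α}
    (hB : IsUnit B.det) (hS : Sᵀ = S) :
    (Bᵀ * S)⁻¹ * (W + Bᵀ * M * B) * (Bᵀ * S)⁻¹ᵀ =
      S⁻¹ * B⁻¹ᵀ * W * B⁻¹ * S⁻¹ + S⁻¹ * M * S⁻¹ := by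
  have hBt : Bᵀ⁻¹ * Bᵀ = 1 := nonsing_inv_mul _ (by rwa [det_transpose])
  have hBB : B * B⁻¹ = 1 := mul_nonsing_inv _ hB
  rw [mul_inv_rev, transpose_mul, transpose_nonsing_inv S, hS, transpose_nonsing_inv,
    transpose_transpose, ← transpose_nonsing_inv, mul_add, add_mul]
  congr 1
  · simp only [Matrix.mul_assoc]
  · calc S⁻¹ * B⁻¹ᵀ * (Bᵀ * M * B) * (B⁻¹ * S⁻¹)
        = S⁻¹ * ((Bᵀ⁻¹ * Bᵀ) * (M * ((B * B⁻¹) * S⁻¹))) := by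
          rw [transpose_nonsing_inv]; simp only [Matrix.mul_assoc]
      _ = S⁻¹ * M * S⁻¹ := by rw [hBt, hBB, Matrix.one_mul, Matrix.one_mul, Matrix.mul_assoc]

theorem inv_diagonal_sqrt_mul_inv_diagonal_mul_inv_diagonal_sqrt {d w : n → ℝ}
    (hd : ∀ i, 0 < d i) (hw : ∀ i, 0 ≤ w i) :
    (diagonal fun i => √(w i + (d i)⁻¹))⁻¹ * (diagonal d)⁻¹ *
        (diagonal fun i => √(w i + (d i)⁻¹))⁻¹ = (diagonal d * diagonal w + 1)⁻¹ := by
  have hpos i : 0 < w i + (d i)⁻¹ := add_pos_of_nonneg_of_pos (hw i) (inv_pos.mpr (hd i))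
  have hdw i : 0 < d i * w i + 1 := by nlinarith [hd i, hw i]
  rw [diagonal_mul_diagonal, ← diagonal_one, diagonal_add,
    inv_diagonal_of_ne_zero fun i => (Real.sqrt_pos.mpr (hpos i)).ne',
    inv_diagonal_of_ne_zero fun i => (hd i).ne', inv_diagonal_of_ne_zero fun i => (hdw i).ne',
    diagonal_mul_diagonal, diagonal_mul_diagonal]
  refine congrArg diagonal (funext fun i => ?_)
  calc (√(w i + (d i)⁻¹))⁻¹ * (d i)⁻¹ * (√(w i + (d i)⁻¹))⁻¹
      = (d i * (√(w i + (d i)⁻¹) * √(w i + (d i)⁻¹)))⁻¹ := by rw [mul_inv]; ring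
    _ = (d i * w i + 1)⁻¹ := by
      rw [Real.mul_self_sqrt (hpos i).le, mul_add, mul_inv_cancel₀ (hd i).ne']

end Matrix

theorem vadu_preconditioned_matrix_formula_general {n : ℕ}
    (B D W Sinv Phalf : Matrix (Fin n) (Fin n) ℝ)
    (d w : Fin n → ℝ) (hd : ∀ i, 0 < d i) (hw : ∀ i, 0 < w i)
    (hBinv : IsUnit B.det)
    (hD : D = Matrix.diagonal d) (hW : W = Matrix.diagonal w)
    (hSinv : Sinv = Bᵀ * D⁻¹ * B)
    (hP : Phalf = Bᵀ * Matrix.diagonal (fun i => Real.sqrt (w i + (d i)⁻¹))) :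
    Phalf⁻¹ * (W + Sinv) * (Phalf⁻¹)ᵀ =
      (Matrix.diagonal (fun i => Real.sqrt (w i + (d i)⁻¹)))⁻¹ * (B⁻¹)ᵀ * W * B⁻¹ *
          (Matrix.diagonal (fun i => Real.sqrt (w i + (d i)⁻¹)))⁻¹
        + (D * W + 1)⁻¹ := by
  subst hP hSinv hD hW
  rw [inv_mul_add_mul_inv_transpose_of_transpose_eq hBinv (diagonal_transpose _),
    inv_diagonal_sqrt_mul_inv_diagonal_mul_inv_diagonal_sqrt hd fun i => (hw i).le]

/-- For the VADU preconditioner `P½ = Bᵀ (W + D⁻¹)^{1/2}` one has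
`P^{-1/2} (W + Σ̃⁻¹) P^{-T/2}
  = (W + D⁻¹)^{-1/2} B⁻ᵀ W B⁻¹ (W + D⁻¹)^{-1/2} + (D W + Iₙ)⁻¹`. -/
theorem vadu_preconditioned_matrix_formula {n : ℕ}
    (B D W Sinv Phalf : Matrix (Fin n) (Fin n) ℝ)
    (d w : Fin n → ℝ) (hd : ∀ i, 0 < d i) (hw : ∀ i, 0 < w i)
    (hBlow : ∀ i j : Fin n, i < j → B i j = 0) (hBdiag : ∀ i, B i i = 1)
    (hBinv : IsUnit B.det)
    (hD : D = Matrix.diagonal d) (hW : W = Matrix.diagonal w)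
    (hSinv : Sinv = Bᵀ * D⁻¹ * B)
    (hP : Phalf = Bᵀ * Matrix.diagonal (fun i => Real.sqrt (w i + (d i)⁻¹))) :
    Phalf⁻¹ * (W + Sinv) * (Phalf⁻¹)ᵀ =
      (Matrix.diagonal (fun i => Real.sqrt (w i + (d i)⁻¹)))⁻¹ * (B⁻¹)ᵀ * W * B⁻¹ *
          (Matrix.diagonal (fun i => Real.sqrt (w i + (d i)⁻¹)))⁻¹
        + (D * W + 1)⁻¹ :=
  vadu_preconditioned_matrix_formula_general B D W Sinv Phalf d w hd hw hBinv hD hW hSinv hP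
end

section
/- Let $B \in \mathbb{R}^{n\times n}$ be an invertible lower-triangular matrix with unit diagonal, and let $D, W \in \mathbb{R}^{n\times n}$ be diagonal matrices with strictly positive diagonal entries $D_i$ and $W_{ii}$. Define $\tilde\Sigma = B^{-1} D B^{-T}$, $\tilde\Sigma^{-1} = B^T D^{-1} B$, and the VADU-preconditioned matrix $M = P^{-1/2}(W + \tilde\Sigma^{-1})P^{-T/2}$ with $P^{1/2} = B^T(W+D^{-1})^{1/2}$. Let $\lambda_n(A) \le \dots \le \lambda_1(A)$ denote the eigenvalues of a symmetric matrix $A \in \mathbb{R}^{n\times n}$. Then for every $l$ with $1 \le l \le n$: $(\lambda_l(\tilde\Sigma)\min_i(W_{ii}) + 1)\,\min_i\big((D_i W_{ii}+1)^{-1}\big) \;\le\; \lambda_l(M) \;\le\; (\lambda_l(\tilde\Sigma)\max_i(W_{ii}) + 1)\,\max_i\big((D_i W_{ii}+1)^{-1}\big)$. -/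
/-!
Write `Y = P^{-1/2} = diag((W + D⁻¹)^{-1/2}) B⁻ᵀ` and `E = diag((DᵢWᵢᵢ + 1)⁻¹)`. Then
`M = Y W Yᵀ + E` and `YᵀY = B⁻¹ (D E) B⁻ᵀ`, while `Σ̃ = B⁻¹ D B⁻ᵀ`. Weyl's monotonicity principle
(a consequence of Courant–Fischer: if `A ≤ A'` in the Loewner order then `λ_l(A) ≤ λ_l(A')`)
applied three times, together with `λ(YYᵀ) = λ(YᵀY)`, gives with `a = max W`, `c = max E`
`λ_l(M) ≤ λ_l(Y W Yᵀ) + c ≤ a λ_l(Y Yᵀ) + c ≤ a c λ_l(Σ̃) + c`, and symmetrically with minima.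
-/

open Matrix Polynomial Module Submodule

section Rayleigh

variable {𝕜 E ι : Type*} [RCLike 𝕜] [NormedAddCommGroup E] [InnerProductSpace 𝕜 E] [Fintype ι]
  {T : E →ₗ[𝕜] E} {b : OrthonormalBasis ι 𝕜 E} {μ : ι → ℝ}

open RCLike

theorem OrthonormalBasis.re_inner_apply_self_eq_sum (hb : ∀ i, T (b i) = (μ i : 𝕜) • b i)
    (x : E) : re (inner 𝕜 (T x) x) = ∑ i, μ i * ‖inner 𝕜 (b i) x‖ ^ 2 := by
  have hTx : T x = ∑ i, (inner 𝕜 (b i) x * μ i) • b i := by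
    conv_lhs => rw [← b.sum_repr' x]
    simp only [map_sum, map_smul, hb, smul_smul]
  rw [hTx, sum_inner, map_sum]
  refine Finset.sum_congr rfl fun i _ => ?_
  rw [inner_smul_left, map_mul (starRingEnd 𝕜), conj_ofReal, mul_right_comm, RCLike.conj_mul,
    ← ofReal_pow, ← ofReal_mul, ofReal_re, mul_comm]

theorem OrthonormalBasis.mul_norm_sq_le_re_inner (hb : ∀ i, T (b i) = (μ i : 𝕜) • b i)
    {m : ℝ} {x : E} (h : ∀ i, inner 𝕜 (b i) x ≠ 0 → m ≤ μ i) :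
    m * ‖x‖ ^ 2 ≤ re (inner 𝕜 (T x) x) := by
  rw [b.re_inner_apply_self_eq_sum hb, ← b.sum_sq_norm_inner_right x, Finset.mul_sum]
  refine Finset.sum_le_sum fun i _ => ?_
  by_cases hi : inner 𝕜 (b i) x = 0
  · simp [hi]
  · exact mul_le_mul_of_nonneg_right (h i hi) (by positivity)

theorem OrthonormalBasis.re_inner_le_mul_norm_sq (hb : ∀ i, T (b i) = (μ i : 𝕜) • b i)
    {m : ℝ} {x : E} (h : ∀ i, inner 𝕜 (b i) x ≠ 0 → μ i ≤ m) :
    re (inner 𝕜 (T x) x) ≤ m * ‖x‖ ^ 2 := by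
  rw [b.re_inner_apply_self_eq_sum hb, ← b.sum_sq_norm_inner_right x, Finset.mul_sum]
  refine Finset.sum_le_sum fun i _ => ?_
  by_cases hi : inner 𝕜 (b i) x = 0
  · simp [hi]
  · exact mul_le_mul_of_nonneg_right (h i hi) (by positivity)

theorem OrthonormalBasis.inner_eq_zero_of_mem_span (b : OrthonormalBasis ι 𝕜 E) {s : Set ι}
    {x : E} (hx : x ∈ span 𝕜 (b '' s)) {j : ι} (hj : j ∉ s) : inner 𝕜 (b j) x = 0 := by
  refine mem_orthogonal_singleton_iff_inner_right.mp (span_le.mpr ?_ hx)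
  rintro _ ⟨i, hi, rfl⟩
  exact mem_orthogonal_singleton_iff_inner_right.mpr
    (b.orthonormal.2 fun hji => hj (hji ▸ hi))

theorem OrthonormalBasis.finrank_span_image (b : OrthonormalBasis ι 𝕜 E) (s : Finset ι) :
    finrank 𝕜 (span 𝕜 (b '' s)) = s.card := by
  have hli : LinearIndependent 𝕜 fun i : (s : Set ι) => b i :=
    b.orthonormal.linearIndependent.comp _ Subtype.val_injective
  rw [Set.image_eq_range, finrank_span_eq_card hli]
  simp

end Rayleigh

theorem LinearMap.eigenvalue_le_of_isPositive_sub {𝕜 E : Type*} [RCLike 𝕜]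
    [NormedAddCommGroup E] [InnerProductSpace 𝕜 E] {n : ℕ} {T S : E →ₗ[𝕜] E}
    {b c : OrthonormalBasis (Fin n) 𝕜 E} {μ ν : Fin n → ℝ}
    (hb : ∀ i, T (b i) = (μ i : 𝕜) • b i) (hc : ∀ i, S (c i) = (ν i : 𝕜) • c i)
    (hμ : Antitone μ) (hν : Antitone ν) (hTS : (S - T).IsPositive) (l : Fin n) : μ l ≤ ν l := by
  have := Module.Finite.of_basis b.toBasis
  set V := span 𝕜 (b '' (Finset.Iic l : Set (Fin n)))
  set U := span 𝕜 (c '' (Finset.Ici l : Set (Fin n)))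
  have hdim : finrank 𝕜 E < finrank 𝕜 V + finrank 𝕜 U := by
    rw [b.finrank_span_image, c.finrank_span_image, Fin.card_Iic, Fin.card_Ici,
      finrank_eq_card_basis b.toBasis, Fintype.card_fin]
    omega
  have hVU : ¬ Disjoint V U := fun h => (finrank_add_finrank_le_of_disjoint h).not_gt hdim
  obtain ⟨x, hxV, hxU, hx⟩ : ∃ x ∈ V, x ∈ U ∧ x ≠ 0 := by
    simpa [disjoint_def] using hVU
  have hTx : μ l * ‖x‖ ^ 2 ≤ RCLike.re (inner 𝕜 (T x) x) := by
    refine b.mul_norm_sq_le_re_inner hb fun i hi => hμ ?_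
    by_contra hil
    exact hi (b.inner_eq_zero_of_mem_span hxV (by simpa using hil))
  have hSx : RCLike.re (inner 𝕜 (S x) x) ≤ ν l * ‖x‖ ^ 2 := by
    refine c.re_inner_le_mul_norm_sq hc fun i hi => hν ?_
    by_contra hil
    exact hi (c.inner_eq_zero_of_mem_span hxU (by simpa using hil))
  have hTS' : RCLike.re (inner 𝕜 (T x) x) ≤ RCLike.re (inner 𝕜 (S x) x) := by
    have := hTS.re_inner_nonneg_left x
    rw [sub_apply, inner_sub_left, map_sub] at this
    linarith
  exact le_of_mul_le_mul_right (hTx.trans (hTS'.trans hSx)) (by positivity)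

theorem eq_of_antitone_of_prod_X_sub_C_eq {R : Type*} [CommRing R] [IsDomain R] [LinearOrder R]
    {n : ℕ} {μ ν : Fin n → R} (hμ : Antitone μ) (hν : Antitone ν)
    (h : ∏ i, (X - C (μ i)) = ∏ i, (X - C (ν i))) : μ = ν := by
  have roots_eq (f : Fin n → R) : (∏ i, (X - C (f i))).roots = Multiset.map f Finset.univ.val := by
    rw [Finset.prod_eq_multiset_prod, ← roots_multiset_prod_X_sub_C (Multiset.map f _),
      Multiset.map_map]
    rfl
  have hperm : (List.ofFn μ).Perm (List.ofFn ν) := by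
    simpa [roots_eq, Fin.univ_val_map] using congrArg roots h
  exact List.ofFn_injective (hperm.eq_of_sortedGE hμ.sortedGE_ofFn hν.sortedGE_ofFn)

namespace Matrix

section Field

variable {ι K : Type*} [Fintype ι] [DecidableEq ι] [Field K]

theorem inv_diagonal_of_ne_zero_s3 {v : ι → K} (hv : ∀ i, v i ≠ 0) : (diagonal v)⁻¹ = diagonal v⁻¹ :=
  inv_eq_left_inv <| by
    rw [diagonal_mul_diagonal, ← diagonal_one]
    exact congrArg diagonal (funext fun i => inv_mul_cancel₀ (hv i))

theorem inv_transpose_mul_diagonal (B : Matrix ι ι K) {s : ι → K} (hs : ∀ i, s i ≠ 0) :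
    (Bᵀ * diagonal s)⁻¹ = diagonal s⁻¹ * (B⁻¹)ᵀ := by
  rw [mul_inv_rev, inv_diagonal_of_ne_zero_s3 hs, transpose_nonsing_inv]

theorem mul_inv_transpose_mul_transpose_mul_mul {B : Matrix ι ι K} (hB : IsUnit B.det)
    (S X : Matrix ι ι K) :
    S * (B⁻¹)ᵀ * (Bᵀ * X * B) * (S * (B⁻¹)ᵀ)ᵀ = S * X * Sᵀ := by
  have hBB : (B⁻¹)ᵀ * Bᵀ = 1 := by rw [← transpose_mul, mul_nonsing_inv B hB, transpose_one]
  calc S * (B⁻¹)ᵀ * (Bᵀ * X * B) * (S * (B⁻¹)ᵀ)ᵀ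
      = S * ((B⁻¹)ᵀ * Bᵀ) * X * (B * B⁻¹) * Sᵀ := by
        simp only [transpose_mul, transpose_transpose, Matrix.mul_assoc]
    _ = S * X * Sᵀ := by rw [hBB, mul_nonsing_inv B hB, Matrix.mul_one, Matrix.mul_one]

end Field

variable {n : ℕ} {A B : Matrix (Fin n) (Fin n) ℝ} {μ ν : Fin n → ℝ}

theorem isHermitian_mul_diagonal_mul_transpose (Y : Matrix (Fin n) (Fin n) ℝ) (f : Fin n → ℝ) :
    (Y * diagonal f * Yᵀ).IsHermitian := by
  simpa using isHermitian_mul_mul_conjTranspose Y (isHermitian_diagonal f)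

theorem posSemidef_mul_diagonal_mul_transpose (Y : Matrix (Fin n) (Fin n) ℝ) {f : Fin n → ℝ}
    (hf : ∀ i, 0 ≤ f i) : (Y * diagonal f * Yᵀ).PosSemidef := by
  simpa using (PosSemidef.diagonal fun i => hf i).mul_mul_conjTranspose_same Y

theorem IsHermitian.exists_antitone_eigenbasis (hA : A.IsHermitian) :
    ∃ (μ : Fin n → ℝ) (b : OrthonormalBasis (Fin n) ℝ (EuclideanSpace ℝ (Fin n))),
      Antitone μ ∧ A.charpoly = ∏ i, (X - C (μ i)) ∧ ∀ i, toEuclideanLin A (b i) = μ i • b i := by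
  set σ := Tuple.sort (-hA.eigenvalues)
  refine ⟨hA.eigenvalues ∘ σ, hA.eigenvectorBasis.reindex σ.symm, ?_, ?_, fun i => ?_⟩
  · exact fun i j hij => neg_le_neg_iff.mp (Tuple.monotone_sort (-hA.eigenvalues) hij)
  · rw [hA.charpoly_eq, ← Equiv.prod_comp σ]
    simp
  · simp [toLpLin_apply, hA.mulVec_eigenvectorBasis]

theorem toEuclideanLin_smul_add_smul_one_apply
    {c : OrthonormalBasis (Fin n) ℝ (EuclideanSpace ℝ (Fin n))}
    (hc : ∀ i, toEuclideanLin B (c i) = ν i • c i) (r s : ℝ) (i : Fin n) :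
    toEuclideanLin (r • B + s • 1) (c i) = (r * ν i + s) • c i := by
  simp [hc, add_smul, mul_smul]

def IsSortedEigenvalues (A : Matrix (Fin n) (Fin n) ℝ) (μ : Fin n → ℝ) : Prop :=
  A.IsHermitian ∧ Antitone μ ∧ A.charpoly = ∏ i, (X - C (μ i))

theorem IsHermitian.exists_isSortedEigenvalues (hA : A.IsHermitian) :
    ∃ μ, A.IsSortedEigenvalues μ := by
  obtain ⟨μ, -, hμ, hc, -⟩ := hA.exists_antitone_eigenbasis
  exact ⟨μ, hA, hμ, hc⟩

namespace IsSortedEigenvalues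

theorem of_charpoly_eq (hA : A.IsSortedEigenvalues μ) (hB : B.IsHermitian)
    (hc : B.charpoly = A.charpoly) : B.IsSortedEigenvalues μ :=
  ⟨hB, hA.2.1, hc.trans hA.2.2⟩

theorem exists_orthonormalBasis (hA : A.IsSortedEigenvalues μ) :
    ∃ b : OrthonormalBasis (Fin n) ℝ (EuclideanSpace ℝ (Fin n)),
      ∀ i, toEuclideanLin A (b i) = μ i • b i := by
  obtain ⟨hA, hμ, hc⟩ := hA
  obtain ⟨θ, b, hθ, hcθ, hb⟩ := hA.exists_antitone_eigenbasis
  obtain rfl : μ = θ := eq_of_antitone_of_prod_X_sub_C_eq hμ hθ (hc.symm.trans hcθ)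
  exact ⟨b, hb⟩

theorem le_smul_add_of_posSemidef_sub (hA : A.IsSortedEigenvalues μ)
    (hB : B.IsSortedEigenvalues ν) {r s : ℝ} (hr : 0 ≤ r) (h : (r • B + s • 1 - A).PosSemidef)
    (l : Fin n) : μ l ≤ r * ν l + s := by
  obtain ⟨b, hb⟩ := hA.exists_orthonormalBasis
  obtain ⟨c, hc⟩ := hB.exists_orthonormalBasis
  refine LinearMap.eigenvalue_le_of_isPositive_sub (𝕜 := ℝ) hb
    (toEuclideanLin_smul_add_smul_one_apply hc r s) hA.2.1 ((hB.2.1.const_mul hr).add_const s)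
    ?_ l
  simpa using isPositive_toEuclideanLin_iff.mpr h

theorem smul_add_le_of_posSemidef_sub (hA : A.IsSortedEigenvalues μ)
    (hB : B.IsSortedEigenvalues ν) {r s : ℝ} (hr : 0 ≤ r) (h : (A - (r • B + s • 1)).PosSemidef)
    (l : Fin n) : r * ν l + s ≤ μ l := by
  obtain ⟨b, hb⟩ := hA.exists_orthonormalBasis
  obtain ⟨c, hc⟩ := hB.exists_orthonormalBasis
  refine LinearMap.eigenvalue_le_of_isPositive_sub (𝕜 := ℝ)
    (toEuclideanLin_smul_add_smul_one_apply hc r s) hb ((hB.2.1.const_mul hr).add_const s)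
    hA.2.1 ?_ l
  simpa using isPositive_toEuclideanLin_iff.mpr h

theorem mem_Icc_of_add_diagonal {K : Matrix (Fin n) (Fin n) ℝ} {κ e : Fin n → ℝ} {lo hi : ℝ}
    (hK : K.IsSortedEigenvalues κ) (hM : (K + diagonal e).IsSortedEigenvalues μ)
    (hlo : ∀ i, lo ≤ e i) (hhi : ∀ i, e i ≤ hi) (l : Fin n) :
    μ l ∈ Set.Icc (κ l + lo) (κ l + hi) := by
  constructor
  · have := hM.smul_add_le_of_posSemidef_sub hK zero_le_one (s := lo) ?_ l
    · simpa using this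
    · rw [one_smul, smul_one_eq_diagonal, add_sub_add_left_eq_sub, diagonal_sub]
      exact PosSemidef.diagonal fun i => sub_nonneg.mpr (hlo i)
  · have := hM.le_smul_add_of_posSemidef_sub hK zero_le_one (s := hi) ?_ l
    · simpa using this
    · rw [one_smul, smul_one_eq_diagonal, add_sub_add_left_eq_sub, diagonal_sub]
      exact PosSemidef.diagonal fun i => sub_nonneg.mpr (hhi i)

theorem mem_Icc_of_mul_diagonal_mul_transpose {Y : Matrix (Fin n) (Fin n) ℝ} {f g : Fin n → ℝ}
    {lo hi : ℝ} (hf : (Y * diagonal f * Yᵀ).IsSortedEigenvalues μ)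
    (hg : (Y * diagonal g * Yᵀ).IsSortedEigenvalues ν) (hlo : 0 ≤ lo) (hhi : 0 ≤ hi)
    (hflo : ∀ i, lo * g i ≤ f i) (hfhi : ∀ i, f i ≤ hi * g i) (l : Fin n) :
    μ l ∈ Set.Icc (lo * ν l) (hi * ν l) := by
  have smul_eq (r : ℝ) : r • (Y * diagonal g * Yᵀ) + (0 : ℝ) • 1 = Y * diagonal (r • g) * Yᵀ := by
    rw [zero_smul, add_zero, diagonal_smul, Matrix.mul_smul, Matrix.smul_mul]
  constructor
  · have := hf.smul_add_le_of_posSemidef_sub hg hlo (s := 0) ?_ l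
    · simpa using this
    · rw [smul_eq, ← Matrix.sub_mul, ← Matrix.mul_sub, diagonal_sub]
      exact posSemidef_mul_diagonal_mul_transpose Y fun i => sub_nonneg.mpr (hflo i)
  · have := hf.le_smul_add_of_posSemidef_sub hg hhi (s := 0) ?_ l
    · simpa using this
    · rw [smul_eq, ← Matrix.sub_mul, ← Matrix.mul_sub, diagonal_sub]
      exact posSemidef_mul_diagonal_mul_transpose Y fun i => sub_nonneg.mpr (hfhi i)

theorem bounds_of_transpose_mul_self_eq {Y Z : Matrix (Fin n) (Fin n) ℝ} {w e d : Fin n → ℝ}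
    (hw : ∀ i, 0 ≤ w i) (he : ∀ i, 0 ≤ e i) (hd : ∀ i, 0 ≤ d i)
    (hYY : Yᵀ * Y = Z * diagonal (fun i => d i * e i) * Zᵀ)
    (hM : (Y * diagonal w * Yᵀ + diagonal e).IsSortedEigenvalues μ)
    (hS : (Z * diagonal d * Zᵀ).IsSortedEigenvalues ν) (l : Fin n) :
    (ν l * (⨅ i, w i) + 1) * (⨅ i, e i) ≤ μ l ∧ μ l ≤ (ν l * (⨆ i, w i) + 1) * (⨆ i, e i) := by
  obtain ⟨κ, hκ⟩ := (isHermitian_mul_diagonal_mul_transpose Y w).exists_isSortedEigenvalues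
  obtain ⟨θ, hθ⟩ := (isHermitian_mul_diagonal_mul_transpose Y fun _ => 1).exists_isSortedEigenvalues
  have hθ' : (Z * diagonal (fun i => d i * e i) * Zᵀ).IsSortedEigenvalues θ :=
    hθ.of_charpoly_eq (isHermitian_mul_diagonal_mul_transpose _ _)
      (by rw [← hYY, charpoly_mul_comm, diagonal_one, Matrix.mul_one])
  have hμκ := hκ.mem_Icc_of_add_diagonal hM (ciInf_le (Finite.bddBelow_range e))
    (le_ciSup (Finite.bddAbove_range e)) l
  have hκθ := hκ.mem_Icc_of_mul_diagonal_mul_transpose hθ (Real.iInf_nonneg hw)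
    (Real.iSup_nonneg hw) (fun i => by simpa using ciInf_le (Finite.bddBelow_range w) i)
    (fun i => by simpa using le_ciSup (Finite.bddAbove_range w) i) l
  have hθν := hθ'.mem_Icc_of_mul_diagonal_mul_transpose hS (Real.iInf_nonneg he)
    (Real.iSup_nonneg he)
    (fun i => by rw [mul_comm (d i)]; gcongr; exacts [hd i, ciInf_le (Finite.bddBelow_range e) i])
    (fun i => by rw [mul_comm (d i)]; gcongr; exacts [hd i, le_ciSup (Finite.bddAbove_range e) i])
    l
  constructor
  · nlinarith [hμκ.1, hκθ.1, mul_le_mul_of_nonneg_left hθν.1 (Real.iInf_nonneg hw)]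
  · nlinarith [hμκ.2, hκθ.2, mul_le_mul_of_nonneg_left hθν.2 (Real.iSup_nonneg hw)]

end IsSortedEigenvalues

end Matrix

theorem inv_sqrt_add_inv_mul_self {x y : ℝ} (hx : 0 < x) (hy : 0 ≤ y) :
    (Real.sqrt (y + x⁻¹))⁻¹ * (Real.sqrt (y + x⁻¹))⁻¹ = x * (x * y + 1)⁻¹ := by
  rw [← mul_inv, Real.mul_self_sqrt (by positivity)]
  field_simp

theorem vadu_eigenvalue_bounds_general {n : ℕ}
    (B D W Sinv St Phalf M : Matrix (Fin n) (Fin n) ℝ)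
    (d w : Fin n → ℝ) (hd : ∀ i, 0 < d i) (hw : ∀ i, 0 < w i)
    (hBinv : IsUnit B.det)
    (hD : D = Matrix.diagonal d) (hW : W = Matrix.diagonal w)
    (hSt : St = B⁻¹ * D * (B⁻¹)ᵀ)
    (hSinv : Sinv = Bᵀ * D⁻¹ * B)
    (hP : Phalf = Bᵀ * Matrix.diagonal (fun i => Real.sqrt (w i + (d i)⁻¹)))
    (hM : M = Phalf⁻¹ * (W + Sinv) * (Phalf⁻¹)ᵀ)
    (μ ν : Fin n → ℝ) (hμa : Antitone μ) (hνa : Antitone ν)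
    (hμ : M.charpoly = ∏ i : Fin n, (X - C (μ i)))
    (hν : St.charpoly = ∏ i : Fin n, (X - C (ν i))) :
    ∀ l : Fin n,
      (ν l * (⨅ i, w i) + 1) * (⨅ i, (d i * w i + 1)⁻¹) ≤ μ l ∧
        μ l ≤ (ν l * (⨆ i, w i) + 1) * (⨆ i, (d i * w i + 1)⁻¹) := by
  intro l
  set s : Fin n → ℝ := fun i => Real.sqrt (w i + (d i)⁻¹)
  set e : Fin n → ℝ := fun i => (d i * w i + 1)⁻¹
  have hss : ∀ i, (s i)⁻¹ * (s i)⁻¹ = d i * e i := fun i =>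
    inv_sqrt_add_inv_mul_self (hd i) (hw i).le
  have hd0 : ∀ i, d i ≠ 0 := fun i => (hd i).ne'
  have hs0 : ∀ i, s i ≠ 0 := fun i => by have := hd i; have := hw i; positivity
  set Y := diagonal s⁻¹ * (B⁻¹)ᵀ
  have hM' : M = Y * diagonal w * Yᵀ + diagonal e := by
    rw [hM, hP, inv_transpose_mul_diagonal B hs0, hW, hSinv, Matrix.mul_add, Matrix.add_mul,
      mul_inv_transpose_mul_transpose_mul_mul hBinv, hD, inv_diagonal_of_ne_zero_s3 hd0,
      diagonal_transpose, diagonal_mul_diagonal, diagonal_mul_diagonal]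
    congr 2
    funext i
    rw [Pi.inv_apply, Pi.inv_apply, mul_right_comm, hss i, mul_right_comm,
      mul_inv_cancel₀ (hd0 i), one_mul]
  have hYY : Yᵀ * Y = B⁻¹ * diagonal (fun i => d i * e i) * (B⁻¹)ᵀ := by
    rw [transpose_mul, transpose_transpose, diagonal_transpose, Matrix.mul_assoc,
      ← Matrix.mul_assoc (diagonal _), diagonal_mul_diagonal, ← Matrix.mul_assoc]
    exact congrArg (fun Δ => B⁻¹ * diagonal Δ * (B⁻¹)ᵀ) (funext hss)
  have he : ∀ i, 0 ≤ e i := fun i => by have := hd i; have := hw i; positivity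
  exact IsSortedEigenvalues.bounds_of_transpose_mul_self_eq (fun i => (hw i).le) he
    (fun i => (hd i).le) hYY
    ⟨(isHermitian_mul_diagonal_mul_transpose Y w).add (isHermitian_diagonal e), hμa, hM' ▸ hμ⟩
    ⟨isHermitian_mul_diagonal_mul_transpose _ _, hνa, hD ▸ hSt ▸ hν⟩ l

/-- Eigenvalue bounds for the VADU-preconditioned matrix
`M = P^{-1/2}(W + Σ̃⁻¹)P^{-T/2}` with `P½ = Bᵀ(W + D⁻¹)^{1/2}`:
for every `l`,
`(λ_l(Σ̃) minᵢ Wᵢᵢ + 1) minᵢ (DᵢWᵢᵢ + 1)⁻¹ ≤ λ_l(M)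
   ≤ (λ_l(Σ̃) maxᵢ Wᵢᵢ + 1) maxᵢ (DᵢWᵢᵢ + 1)⁻¹`.
The decreasingly ordered eigenvalue sequences `μ` of `M` and `ν` of `Σ̃` are characterized
by being antitone and by the factorizations of the characteristic polynomials. -/
theorem vadu_eigenvalue_bounds {n : ℕ}
    (B D W Sinv St Phalf M : Matrix (Fin n) (Fin n) ℝ)
    (d w : Fin n → ℝ) (hd : ∀ i, 0 < d i) (hw : ∀ i, 0 < w i)
    (hBlow : ∀ i j : Fin n, i < j → B i j = 0) (hBdiag : ∀ i, B i i = 1)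
    (hBinv : IsUnit B.det)
    (hD : D = Matrix.diagonal d) (hW : W = Matrix.diagonal w)
    (hSt : St = B⁻¹ * D * (B⁻¹)ᵀ)
    (hSinv : Sinv = Bᵀ * D⁻¹ * B)
    (hP : Phalf = Bᵀ * Matrix.diagonal (fun i => Real.sqrt (w i + (d i)⁻¹)))
    (hM : M = Phalf⁻¹ * (W + Sinv) * (Phalf⁻¹)ᵀ)
    (μ ν : Fin n → ℝ) (hμa : Antitone μ) (hνa : Antitone ν)
    (hμ : M.charpoly = ∏ i : Fin n, (X - C (μ i)))
    (hν : St.charpoly = ∏ i : Fin n, (X - C (ν i))) :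
    ∀ l : Fin n,
      (ν l * (⨅ i, w i) + 1) * (⨅ i, (d i * w i + 1)⁻¹) ≤ μ l ∧
        μ l ≤ (ν l * (⨆ i, w i) + 1) * (⨆ i, (d i * w i + 1)⁻¹) :=
  vadu_eigenvalue_bounds_general B D W Sinv St Phalf M d w hd hw hBinv hD hW hSt hSinv hP hM μ ν hμa
    hνa hμ hν
end

section
/- Let $B \in \mathbb{R}^{n\times n}$ be an invertible lower-triangular matrix with unit diagonal, and let $D, W \in \mathbb{R}^{n\times n}$ be diagonal matrices with strictly positive diagonal entries $D_i$ and $W_{ii}$. Define $\tilde\Sigma^{-1} = B^T D^{-1} B$ and the VADU-preconditioned matrix $M = P^{-1/2}(W + \tilde\Sigma^{-1})P^{-T/2}$ with $P^{1/2} = B^T(W+D^{-1})^{1/2}$. Then the smallest eigenvalue of $M$ satisfies $\lambda_n(M) > \min_i\big((D_i W_{ii}+1)^{-1}\big)$. -/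
/-!
Writing an eigenvector as `x = P½ᵀ u` turns `M x = λ x` into the generalized eigenproblem
`(W + Bᵀ D⁻¹ B) u = λ Bᵀ (W + D⁻¹) B u`. With `v = B u`, pairing with `u` gives
`uᵀ W u + vᵀ D⁻¹ v = λ vᵀ (W + D⁻¹) v`. Since `(DᵢWᵢᵢ + 1)⁻¹ (Wᵢᵢ + Dᵢ⁻¹) = Dᵢ⁻¹`, the minimum `c`
of these factors satisfies `c vᵀ (W + D⁻¹) v ≤ vᵀ D⁻¹ v`, and `uᵀ W u > 0` makes the inequality
`c < λ` strict.
-/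

open Matrix

namespace Matrix

variable {ι R : Type*} [Fintype ι] [CommRing R]

theorem dotProduct_transpose_mul_mul_mulVec (B E : Matrix ι ι R) (u : ι → R) :
    u ⬝ᵥ ((Bᵀ * E * B) *ᵥ u) = (B *ᵥ u) ⬝ᵥ (E *ᵥ (B *ᵥ u)) := by
  rw [← mulVec_mulVec, ← mulVec_mulVec, dotProduct_mulVec, vecMul_transpose]

variable [DecidableEq ι]

theorem transpose_mulVec_transpose_nonsing_inv_mulVec {P : Matrix ι ι R} (hP : IsUnit P.det)
    (x : ι → R) : Pᵀ *ᵥ (P⁻¹ᵀ *ᵥ x) = x := by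
  rw [mulVec_mulVec, transpose_nonsing_inv, mul_nonsing_inv _ (by rwa [det_transpose]),
    one_mulVec]

theorem mulVec_eq_smul_mul_transpose_mulVec_of_conj {P A : Matrix ι ι R} (hP : IsUnit P.det)
    {x : ι → R} {μ : R} (hx : (P⁻¹ * A * P⁻¹ᵀ) *ᵥ x = μ • x) :
    A *ᵥ (P⁻¹ᵀ *ᵥ x) = μ • ((P * Pᵀ) *ᵥ (P⁻¹ᵀ *ᵥ x)) := by
  have := congrArg (P *ᵥ ·) hx
  simp only [mulVec_mulVec, ← mul_assoc, mul_nonsing_inv _ hP, one_mul] at this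
  rw [mulVec_mulVec, this, mulVec_smul, ← mulVec_mulVec,
    transpose_mulVec_transpose_nonsing_inv_mulVec hP]

theorem dotProduct_diagonal_mulVec (a v : ι → R) :
    v ⬝ᵥ (diagonal a *ᵥ v) = ∑ i, a i * v i ^ 2 := by
  simp only [dotProduct, mulVec_diagonal]
  exact Finset.sum_congr rfl fun i _ => by ring

end Matrix

theorem mul_add_inv_le_inv {c d w : ℝ} (hd : 0 < d) (hw : 0 ≤ w) (hc : c ≤ (d * w + 1)⁻¹) :
    c * (w + d⁻¹) ≤ d⁻¹ := by
  have hsum : w + d⁻¹ = (d * w + 1) * d⁻¹ := by field_simp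
  calc c * (w + d⁻¹) ≤ (d * w + 1)⁻¹ * (w + d⁻¹) := by gcongr
    _ = d⁻¹ := by rw [hsum, inv_mul_cancel_left₀ (by positivity)]

theorem iInf_inv_mul_add_one_lt_of_dotProduct_eq {ι : Type*} [Fintype ι] [DecidableEq ι]
    {d w u v : ι → ℝ} {μ : ℝ} (hd : ∀ i, 0 < d i) (hw : ∀ i, 0 < w i) (hu : u ≠ 0)
    (h : u ⬝ᵥ (diagonal w *ᵥ u) + v ⬝ᵥ (diagonal d⁻¹ *ᵥ v) =
      μ * v ⬝ᵥ (diagonal (w + d⁻¹) *ᵥ v)) :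
    ⨅ i, (d i * w i + 1)⁻¹ < μ := by
  set c := ⨅ i, (d i * w i + 1)⁻¹
  have hW : 0 < u ⬝ᵥ (diagonal w *ᵥ u) := by
    simpa using (PosDef.diagonal hw).dotProduct_mulVec_pos hu
  have hD : c * v ⬝ᵥ (diagonal (w + d⁻¹) *ᵥ v) ≤ v ⬝ᵥ (diagonal d⁻¹ *ᵥ v) := by
    simp only [dotProduct_diagonal_mulVec, Finset.mul_sum, ← mul_assoc]
    gcongr with i
    exact mul_add_inv_le_inv (hd i) (hw i).le (ciInf_le (Finite.bddBelow_range _) i)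
  have hQ : 0 ≤ v ⬝ᵥ (diagonal (w + d⁻¹) *ᵥ v) := by
    rw [dotProduct_diagonal_mulVec]
    exact Finset.sum_nonneg fun i _ =>
      mul_nonneg (add_pos (hw i) (inv_pos.2 (hd i))).le (sq_nonneg _)
  exact lt_of_mul_lt_mul_right (by linarith) hQ

theorem vadu_smallest_eigenvalue_bound_general {n : ℕ}
    (B D W Sinv Phalf M : Matrix (Fin n) (Fin n) ℝ)
    (d w : Fin n → ℝ) (hd : ∀ i, 0 < d i) (hw : ∀ i, 0 < w i)
    (hBinv : IsUnit B.det)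
    (hD : D = Matrix.diagonal d) (hW : W = Matrix.diagonal w)
    (hSinv : Sinv = Bᵀ * D⁻¹ * B)
    (hP : Phalf = Bᵀ * Matrix.diagonal (fun i => Real.sqrt (w i + (d i)⁻¹)))
    (hM : M = Phalf⁻¹ * (W + Sinv) * (Phalf⁻¹)ᵀ) :
    ∀ (lam : ℝ) (x : Fin n → ℝ), x ≠ 0 → M *ᵥ x = lam • x →
      (⨅ i, (d i * w i + 1)⁻¹) < lam := by
  intro lam x hx heig
  have hpos : ∀ i, 0 < w i + (d i)⁻¹ := fun i => add_pos (hw i) (inv_pos.2 (hd i))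
  have hPdet : IsUnit Phalf.det := by
    rw [hP, det_mul, det_transpose, det_diagonal]
    exact hBinv.mul (Finset.prod_ne_zero_iff.2 fun i _ => (Real.sqrt_pos.2 (hpos i)).ne').isUnit
  have hPP : Phalf * Phalfᵀ = Bᵀ * diagonal (w + d⁻¹) * B := by
    rw [hP, transpose_mul, transpose_transpose, diagonal_transpose, mul_assoc,
      ← mul_assoc (diagonal _), diagonal_mul_diagonal, ← mul_assoc]
    congr 3; ext i
    exact Real.mul_self_sqrt (hpos i).le
  have hDinv : D⁻¹ = diagonal d⁻¹ := by
    refine inv_eq_right_inv ?_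
    rw [hD, diagonal_mul_diagonal, ← diagonal_one]
    exact congrArg diagonal (funext fun i => mul_inv_cancel₀ (hd i).ne')
  have hgen := mulVec_eq_smul_mul_transpose_mulVec_of_conj hPdet (hM ▸ heig)
  set u := Phalf⁻¹ᵀ *ᵥ x with hu_def
  have hu : u ≠ 0 := fun h0 => hx <| by
    rw [← transpose_mulVec_transpose_nonsing_inv_mulVec hPdet x, ← hu_def, h0, mulVec_zero]
  have hquad : u ⬝ᵥ (diagonal w *ᵥ u) + (B *ᵥ u) ⬝ᵥ (diagonal d⁻¹ *ᵥ (B *ᵥ u)) =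
      lam * (B *ᵥ u) ⬝ᵥ (diagonal (w + d⁻¹) *ᵥ (B *ᵥ u)) := by
    simpa only [hPP, hW, hSinv, hDinv, add_mulVec, dotProduct_add, dotProduct_smul,
      dotProduct_transpose_mul_mul_mulVec, smul_eq_mul] using congrArg (u ⬝ᵥ ·) hgen
  exact iInf_inv_mul_add_one_lt_of_dotProduct_eq hd hw hu hquad

/-- The smallest eigenvalue of the VADU-preconditioned matrix
`M = P^{-1/2}(W + Σ̃⁻¹)P^{-T/2}` with `P½ = Bᵀ(W + D⁻¹)^{1/2}` satisfies
`λₙ(M) > minᵢ (DᵢWᵢᵢ + 1)⁻¹`; equivalently, every eigenvalue of `M` exceeds this bound. -/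
theorem vadu_smallest_eigenvalue_bound {n : ℕ}
    (B D W Sinv Phalf M : Matrix (Fin n) (Fin n) ℝ)
    (d w : Fin n → ℝ) (hd : ∀ i, 0 < d i) (hw : ∀ i, 0 < w i)
    (hBlow : ∀ i j : Fin n, i < j → B i j = 0) (hBdiag : ∀ i, B i i = 1)
    (hBinv : IsUnit B.det)
    (hD : D = Matrix.diagonal d) (hW : W = Matrix.diagonal w)
    (hSinv : Sinv = Bᵀ * D⁻¹ * B)
    (hP : Phalf = Bᵀ * Matrix.diagonal (fun i => Real.sqrt (w i + (d i)⁻¹)))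
    (hM : M = Phalf⁻¹ * (W + Sinv) * (Phalf⁻¹)ᵀ) :
    ∀ (lam : ℝ) (x : Fin n → ℝ), x ≠ 0 → M *ᵥ x = lam • x →
      (⨅ i, (d i * w i + 1)⁻¹) < lam :=
  vadu_smallest_eigenvalue_bound_general B D W Sinv Phalf M d w hd hw hBinv hD hW hSinv hP hM
end

section
/- Let $B \in \mathbb{R}^{n\times n}$ be an invertible lower-triangular matrix with unit diagonal, and let $D, W \in \mathbb{R}^{n\times n}$ be diagonal matrices with strictly positive diagonal entries. Define $\tilde\Sigma = B^{-1} D B^{-T}$, $\tilde\Sigma^{-1} = B^T D^{-1} B$, and the LVA-preconditioned matrix $M = P^{-1/2}(W + \tilde\Sigma^{-1})P^{-T/2}$ with $P^{1/2} = B^T D^{-1/2}$. Then for every $l$ with $1 \le l \le n$: $\lambda_l(\tilde\Sigma)\min_i(W_{ii}) + 1 \;\le\; \lambda_l(M) \;\le\; \lambda_l(\tilde\Sigma)\max_i(W_{ii}) + 1$, and in particular the smallest eigenvalue satisfies $\lambda_n(M) > 1$. -/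
open Matrix Polynomial

/-!
Put `A = D^{1/2} B^{-T} = P^{-1/2}`. Then `A Σ̃⁻¹ Aᵀ = I`, so `M = A W Aᵀ + I`, and `Σ̃ = Aᵀ A`
has the same spectrum as `A Aᵀ`. In the Loewner order
`(minᵢ Wᵢᵢ) A Aᵀ ≤ A W Aᵀ ≤ (maxᵢ Wᵢᵢ) A Aᵀ`, and the `l`-th largest eigenvalue is monotone
in the Loewner order (Courant–Fischer). Finally `Σ̃` is positive definite, so
`λ_l(Σ̃) minᵢ Wᵢᵢ > 0` and `λ_l(M) > 1`.
-/

section InnerProductSpace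

variable {𝕜 E : Type*} [RCLike 𝕜] [NormedAddCommGroup E] [InnerProductSpace 𝕜 E]

theorem LinearMap.IsSymmetric.eigenvalues_eq_of_charpoly_eq [FiniteDimensional 𝕜 E]
    {T : E →ₗ[𝕜] E} (hT : T.IsSymmetric) {n : ℕ} (hn : Module.finrank 𝕜 E = n)
    {s : Fin n → ℝ} (hs : Antitone s) (h : T.charpoly = ∏ i, (X - C (s i : 𝕜))) :
    hT.eigenvalues hn = s := by
  refine List.ofFn_injective ?_
  rw [← hT.sort_roots_charpoly_eq_eigenvalues hn, h, roots_prod _ _ (by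
    simp [Finset.prod_ne_zero_iff, X_sub_C_ne_zero])]
  simp only [roots_X_sub_C, Multiset.bind_singleton, Fin.univ_val_map, Multiset.map_coe,
    Multiset.coe_sort, List.map_ofFn, Function.comp_def, RCLike.ofReal_re]
  refine List.mergeSort_of_pairwise ?_
  simp_rw [decide_eq_true_eq, ← List.sortedGE_iff_pairwise]
  exact hs.sortedGE_ofFn

namespace OrthonormalBasis

variable {ι : Type*} [Fintype ι]

theorem finrank_span_image_s5 (b : OrthonormalBasis ι 𝕜 E) (K : Finset ι) :
    Module.finrank 𝕜 (Submodule.span 𝕜 (b '' K)) = K.card := by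
  rw [Set.image_eq_range, ← Fintype.card_coe]
  exact finrank_span_eq_card (b.orthonormal.linearIndependent.comp _ Subtype.val_injective)

theorem repr_eq_zero_of_mem_span_image (b : OrthonormalBasis ι 𝕜 E) {K : Set ι} {x : E}
    (hx : x ∈ Submodule.span 𝕜 (b '' K)) {i : ι} (hi : i ∉ K) : b.repr x i = 0 := by
  rw [← b.coe_toBasis] at hx
  rw [← b.coe_toBasis_repr_apply, ← Finsupp.notMem_support_iff]
  exact fun h => hi (b.toBasis.repr_support_subset_of_mem_span K hx h)

variable (b : OrthonormalBasis ι 𝕜 E) {T : E →ₗ[𝕜] E} {s : ι → ℝ}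

theorem re_inner_map_self_eq_sum (hb : ∀ i, T (b i) = (s i : 𝕜) • b i) (x : E) :
    RCLike.re (inner 𝕜 (T x) x) = ∑ i, s i * ‖b.repr x i‖ ^ 2 := by
  have hTx : T x = ∑ i, (s i * b.repr x i : 𝕜) • b i := by
    conv_lhs => rw [← b.sum_repr x]
    simp only [map_sum, map_smul, hb, smul_smul, mul_comm]
  simp only [hTx, sum_inner, inner_smul_left, ← b.repr_apply_apply, map_mul, RCLike.conj_ofReal,
    mul_assoc, RCLike.conj_mul, map_sum]
  norm_cast

theorem mul_norm_sq_le_re_inner_map_self (hb : ∀ i, T (b i) = (s i : 𝕜) • b i) {K : Set ι}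
    {c : ℝ} (hc : ∀ i ∈ K, c ≤ s i) {x : E} (hx : x ∈ Submodule.span 𝕜 (b '' K)) :
    c * ‖x‖ ^ 2 ≤ RCLike.re (inner 𝕜 (T x) x) := by
  rw [b.re_inner_map_self_eq_sum hb, ← b.sum_sq_norm_inner_right, Finset.mul_sum]
  refine Finset.sum_le_sum fun i _ => ?_
  rw [← b.repr_apply_apply]
  by_cases hi : i ∈ K
  · exact mul_le_mul_of_nonneg_right (hc i hi) (sq_nonneg _)
  · simp [b.repr_eq_zero_of_mem_span_image hx hi]

theorem re_inner_map_self_le_mul_norm_sq (hb : ∀ i, T (b i) = (s i : 𝕜) • b i) {K : Set ι}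
    {c : ℝ} (hc : ∀ i ∈ K, s i ≤ c) {x : E} (hx : x ∈ Submodule.span 𝕜 (b '' K)) :
    RCLike.re (inner 𝕜 (T x) x) ≤ c * ‖x‖ ^ 2 := by
  rw [b.re_inner_map_self_eq_sum hb, ← b.sum_sq_norm_inner_right, Finset.mul_sum]
  refine Finset.sum_le_sum fun i _ => ?_
  rw [← b.repr_apply_apply]
  by_cases hi : i ∈ K
  · exact mul_le_mul_of_nonneg_right (hc i hi) (sq_nonneg _)
  · simp [b.repr_eq_zero_of_mem_span_image hx hi]

/-- Courant–Fischer: the span of the first `l + 1` eigenvectors of `S` and that of the last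
`n - l` eigenvectors of `T` meet in a nonzero vector, on which the two Rayleigh quotients are
compared with `s l` and `t l`. -/
theorem eigenvalue_le_of_forall_re_inner_le {n : ℕ} (b c : OrthonormalBasis (Fin n) 𝕜 E)
    {S T : E →ₗ[𝕜] E} {s t : Fin n → ℝ} (hs : Antitone s) (ht : Antitone t)
    (hbS : ∀ i, S (b i) = (s i : 𝕜) • b i) (hcT : ∀ i, T (c i) = (t i : 𝕜) • c i)
    (hST : ∀ x, RCLike.re (inner 𝕜 (S x) x) ≤ RCLike.re (inner 𝕜 (T x) x)) (l : Fin n) :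
    s l ≤ t l := by
  have : FiniteDimensional 𝕜 E := b.toBasis.finiteDimensional_of_finite
  set V := Submodule.span 𝕜 (b '' ↑(Finset.Iic l))
  set W := Submodule.span 𝕜 (c '' ↑(Finset.Ici l))
  have hdim : Module.finrank 𝕜 E < Module.finrank 𝕜 V + Module.finrank 𝕜 W := by
    rw [b.finrank_span_image_s5, c.finrank_span_image_s5, Fin.card_Iic, Fin.card_Ici,
      Module.finrank_eq_card_basis b.toBasis, Fintype.card_fin]
    omega
  obtain ⟨x, hxV, hxW, hx0⟩ : ∃ x ∈ V, x ∈ W ∧ x ≠ 0 := by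
    by_contra! h
    exact hdim.not_ge
      (Submodule.finrank_add_finrank_le_of_disjoint (Submodule.disjoint_def.mpr h))
  refine le_of_mul_le_mul_right ?_ (by positivity : 0 < ‖x‖ ^ 2)
  calc s l * ‖x‖ ^ 2 ≤ RCLike.re (inner 𝕜 (S x) x) :=
        b.mul_norm_sq_le_re_inner_map_self hbS (fun i hi => hs (Finset.mem_Iic.mp hi)) hxV
    _ ≤ RCLike.re (inner 𝕜 (T x) x) := hST x
    _ ≤ t l * ‖x‖ ^ 2 :=
        c.re_inner_map_self_le_mul_norm_sq hcT (fun i hi => ht (Finset.mem_Ici.mp hi)) hxW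

end OrthonormalBasis

end InnerProductSpace

namespace Matrix

open scoped ComplexOrder

variable {𝕜 : Type*} [RCLike 𝕜]

theorem charpoly_toEuclideanLin {m : Type*} [Fintype m] [DecidableEq m] (A : Matrix m m 𝕜) :
    (toEuclideanLin A).charpoly = A.charpoly := by
  unfold toEuclideanLin
  rw [toLpLin_eq_toLin, charpoly_toLin]

theorem IsHermitian.exists_orthonormalBasis_toEuclideanLin_eq_smul {n : ℕ}
    {A : Matrix (Fin n) (Fin n) 𝕜} (hA : A.IsHermitian) {s : Fin n → ℝ} (hs : Antitone s)
    (h : A.charpoly = ∏ i, (X - C (s i : 𝕜))) :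
    ∃ b : OrthonormalBasis (Fin n) 𝕜 (EuclideanSpace 𝕜 (Fin n)),
      ∀ i, toEuclideanLin A (b i) = (s i : 𝕜) • b i := by
  have hT := isSymmetric_toEuclideanLin_iff.mpr hA
  have hn : Module.finrank 𝕜 (EuclideanSpace 𝕜 (Fin n)) = n := finrank_euclideanSpace_fin
  have hs' := hT.eigenvalues_eq_of_charpoly_eq hn hs (by rwa [charpoly_toEuclideanLin])
  exact ⟨hT.eigenvectorBasis hn, fun i => by rw [hT.apply_eigenvectorBasis, hs']⟩

theorem re_inner_toEuclideanLin_le_of_posSemidef_sub {m : Type*} [Fintype m] [DecidableEq m]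
    {S T : Matrix m m 𝕜} (h : (T - S).PosSemidef) (x : EuclideanSpace 𝕜 m) :
    RCLike.re (inner 𝕜 (toEuclideanLin S x) x) ≤ RCLike.re (inner 𝕜 (toEuclideanLin T x) x) := by
  have := (isPositive_toEuclideanLin_iff.mpr h).re_inner_nonneg_left x
  rw [map_sub, LinearMap.sub_apply, inner_sub_left, map_sub] at this
  linarith

theorem PosDef.pos_of_charpoly_eq_prod {n : ℕ} {A : Matrix (Fin n) (Fin n) 𝕜} (hA : A.PosDef)
    {s : Fin n → ℝ} (h : A.charpoly = ∏ i, (X - C (s i : 𝕜))) (i : Fin n) : 0 < s i := by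
  have hmem : (s i : 𝕜) ∈ A.charpoly.roots := by
    rw [mem_roots (A.charpoly_monic.ne_zero), h, IsRoot, eval_prod, Finset.prod_eq_zero_iff]
    exact ⟨i, Finset.mem_univ i, by simp⟩
  rw [hA.isHermitian.roots_charpoly_eq_eigenvalues] at hmem
  obtain ⟨j, -, hj⟩ := Multiset.mem_map.mp hmem
  rw [← RCLike.ofReal_injective hj]
  exact hA.eigenvalues_pos j

theorem inv_diagonal_of_ne_zero_s5 {m : Type*} [Fintype m] [DecidableEq m] {d : m → ℝ}
    (hd : ∀ i, d i ≠ 0) : (diagonal d)⁻¹ = diagonal fun i => (d i)⁻¹ :=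
  inv_eq_right_inv <| by simp [diagonal_mul_diagonal, hd]

theorem diagonal_sqrt_mul_self {m : Type*} [Fintype m] [DecidableEq m] {d : m → ℝ}
    (hd : ∀ i, 0 ≤ d i) :
    diagonal (fun i => √(d i)) * diagonal (fun i => √(d i)) = diagonal d := by
  simp [diagonal_mul_diagonal, Real.mul_self_sqrt, hd]

theorem posSemidef_mul_diagonal_mul_transpose_s5 {m k : Type*} [Fintype m] [Fintype k]
    [DecidableEq k] (A : Matrix m k ℝ) {v : k → ℝ} (hv : ∀ i, 0 ≤ v i) :
    (A * diagonal v * Aᵀ).PosSemidef := by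
  simpa [conjTranspose_eq_transpose_of_trivial] using
    (posSemidef_diagonal_iff.mpr hv).mul_mul_conjTranspose_same A

end Matrix

section Preconditioned

variable {n : ℕ} (A : Matrix (Fin n) (Fin n) ℝ) {w μ ν : Fin n → ℝ}

theorem exists_orthonormalBasis_mul_diagonal_const_mul_transpose_add_one (hνa : Antitone ν)
    (hν : (Aᵀ * A).charpoly = ∏ i, (X - C (ν i))) (a : ℝ) :
    ∃ b : OrthonormalBasis (Fin n) ℝ (EuclideanSpace ℝ (Fin n)),
      ∀ i, toEuclideanLin (A * diagonal (fun _ => a) * Aᵀ + 1) (b i) = (a * ν i + 1) • b i := by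
  have hG : (A * Aᵀ).IsHermitian := by
    simpa [conjTranspose_eq_transpose_of_trivial] using isHermitian_mul_conjTranspose_self A
  obtain ⟨b, hb⟩ := hG.exists_orthonormalBasis_toEuclideanLin_eq_smul hνa
    (by rw [charpoly_mul_comm]; exact hν)
  refine ⟨b, fun i => ?_⟩
  rw [← smul_one_eq_diagonal, Matrix.mul_smul, Matrix.mul_one, Matrix.smul_mul, map_add,
    map_smul, toLpLin_one, LinearMap.add_apply, LinearMap.smul_apply, hb, LinearMap.id_apply,
    smul_smul, add_smul, one_smul]
  rfl

theorem eigenvalue_mul_diagonal_mul_transpose_add_one_mem_Icc {a b : ℝ} (ha : 0 ≤ a)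
    (haw : ∀ i, a ≤ w i) (hwb : ∀ i, w i ≤ b) (hμa : Antitone μ) (hνa : Antitone ν)
    (hμ : (A * diagonal w * Aᵀ + 1).charpoly = ∏ i, (X - C (μ i)))
    (hν : (Aᵀ * A).charpoly = ∏ i, (X - C (ν i))) (l : Fin n) :
    μ l ∈ Set.Icc (ν l * a + 1) (ν l * b + 1) := by
  have hM : (A * diagonal w * Aᵀ + 1).IsHermitian :=
    (posSemidef_mul_diagonal_mul_transpose_s5 A fun i => ha.trans (haw i)).isHermitian.add
      isHermitian_one
  obtain ⟨bM, hbM⟩ := hM.exists_orthonormalBasis_toEuclideanLin_eq_smul hμa hμ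
  obtain ⟨bA, hbA⟩ := exists_orthonormalBasis_mul_diagonal_const_mul_transpose_add_one A hνa hν a
  obtain ⟨bB, hbB⟩ := exists_orthonormalBasis_mul_diagonal_const_mul_transpose_add_one A hνa hν b
  have hb : 0 ≤ b := ha.trans ((haw l).trans (hwb l))
  have hlow := bA.eigenvalue_le_of_forall_re_inner_le bM ((hνa.const_mul ha).add_const 1) hμa
    hbA hbM (re_inner_toEuclideanLin_le_of_posSemidef_sub ?_) l
  have hup := bM.eigenvalue_le_of_forall_re_inner_le bB hμa ((hνa.const_mul hb).add_const 1)
    hbM hbB (re_inner_toEuclideanLin_le_of_posSemidef_sub ?_) l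
  · constructor <;> linarith [mul_comm (ν l) a, mul_comm (ν l) b]
  all_goals
    rw [add_sub_add_right_eq_sub, ← Matrix.sub_mul, ← Matrix.mul_sub, diagonal_sub]
    exact posSemidef_mul_diagonal_mul_transpose_s5 A fun i => sub_nonneg.mpr (by simp [haw, hwb])

end Preconditioned

namespace Matrix

variable {m : Type*} [Fintype m] [DecidableEq m] {d : m → ℝ}

theorem inv_transpose_mul_diagonal_sqrt_inv (B : Matrix m m ℝ) (hd : ∀ i, 0 < d i) :
    (Bᵀ * diagonal (fun i => √(d i)⁻¹))⁻¹ = diagonal (fun i => √(d i)) * (B⁻¹)ᵀ := by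
  rw [Matrix.mul_inv_rev, transpose_nonsing_inv,
    inv_diagonal_of_ne_zero_s5 fun i => by have := hd i; positivity]
  simp [Real.sqrt_inv]

theorem mul_transpose_mul_inv_diagonal_mul_mul_transpose_eq_one {B : Matrix m m ℝ}
    (hB : IsUnit B.det) (hd : ∀ i, 0 < d i) :
    (diagonal (fun i => √(d i)) * (B⁻¹)ᵀ) * (Bᵀ * (diagonal d)⁻¹ * B) *
      (diagonal (fun i => √(d i)) * (B⁻¹)ᵀ)ᵀ = 1 := by
  have hBB : B * B⁻¹ = 1 := mul_nonsing_inv B hB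
  simp only [transpose_mul, transpose_transpose, diagonal_transpose, Matrix.mul_assoc]
  rw [← Matrix.mul_assoc B, hBB, Matrix.one_mul, ← Matrix.mul_assoc (B⁻¹)ᵀ, ← transpose_mul, hBB,
    transpose_one, Matrix.one_mul, inv_diagonal_of_ne_zero_s5 fun i => (hd i).ne',
    diagonal_mul_diagonal, diagonal_mul_diagonal, ← diagonal_one]
  exact congrArg diagonal (funext fun i => by
    rw [mul_left_comm, Real.mul_self_sqrt (hd i).le, inv_mul_cancel₀ (hd i).ne'])

theorem transpose_mul_self_diagonal_sqrt_mul_inv_transpose (B : Matrix m m ℝ)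
    (hd : ∀ i, 0 ≤ d i) :
    (diagonal (fun i => √(d i)) * (B⁻¹)ᵀ)ᵀ * (diagonal (fun i => √(d i)) * (B⁻¹)ᵀ) =
      B⁻¹ * diagonal d * (B⁻¹)ᵀ := by
  rw [transpose_mul, transpose_transpose, diagonal_transpose, Matrix.mul_assoc,
    ← Matrix.mul_assoc (diagonal _), diagonal_sqrt_mul_self hd, Matrix.mul_assoc]

theorem posDef_inv_mul_diagonal_mul_inv_transpose {B : Matrix m m ℝ} (hB : IsUnit B.det)
    (hd : ∀ i, 0 < d i) : (B⁻¹ * diagonal d * (B⁻¹)ᵀ).PosDef := by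
  have hBinv : Function.Injective (B⁻¹).vecMul :=
    vecMul_injective_iff_isUnit.mpr (isUnit_nonsing_inv_iff.mpr ((isUnit_iff_isUnit_det B).mpr hB))
  simpa [conjTranspose_eq_transpose_of_trivial] using
    (posDef_diagonal_iff.mpr hd).mul_mul_conjTranspose_same hBinv

end Matrix

theorem lva_eigenvalue_bounds_general {n : ℕ}
    (B D W Sinv St Phalf M : Matrix (Fin n) (Fin n) ℝ)
    (d w : Fin n → ℝ) (hd : ∀ i, 0 < d i) (hw : ∀ i, 0 < w i)
    (hBinv : IsUnit B.det)
    (hD : D = Matrix.diagonal d) (hW : W = Matrix.diagonal w)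
    (hSt : St = B⁻¹ * D * (B⁻¹)ᵀ)
    (hSinv : Sinv = Bᵀ * D⁻¹ * B)
    (hP : Phalf = Bᵀ * Matrix.diagonal (fun i => Real.sqrt ((d i)⁻¹)))
    (hM : M = Phalf⁻¹ * (W + Sinv) * (Phalf⁻¹)ᵀ)
    (μ ν : Fin n → ℝ) (hμa : Antitone μ) (hνa : Antitone ν)
    (hμ : M.charpoly = ∏ i : Fin n, (X - C (μ i)))
    (hν : St.charpoly = ∏ i : Fin n, (X - C (ν i))) :
    ∀ l : Fin n,
      (ν l * (⨅ i, w i) + 1 ≤ μ l ∧ μ l ≤ ν l * (⨆ i, w i) + 1) ∧ 1 < μ l := by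
  intro l
  have : Nonempty (Fin n) := ⟨l⟩
  set A := diagonal (fun i => √(d i)) * (B⁻¹)ᵀ
  have hMA : M = A * diagonal w * Aᵀ + 1 := by
    rw [hM, hP, inv_transpose_mul_diagonal_sqrt_inv B hd, Matrix.mul_add, Matrix.add_mul, hSinv,
      hD, mul_transpose_mul_inv_diagonal_mul_mul_transpose_eq_one hBinv hd, hW]
  have hStA : St = Aᵀ * A := by
    rw [hSt, hD, transpose_mul_self_diagonal_sqrt_mul_inv_transpose B fun i => (hd i).le]
  obtain ⟨j, hj⟩ := exists_eq_ciInf_of_finite (f := w)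
  have hbounds := eigenvalue_mul_diagonal_mul_transpose_add_one_mem_Icc A (hj ▸ (hw j).le)
    (Finite.ciInf_le w) (Finite.le_ciSup w) hμa hνa (hMA ▸ hμ) (hStA ▸ hν) l
  have hνl : 0 < ν l :=
    (posDef_inv_mul_diagonal_mul_inv_transpose hBinv hd).pos_of_charpoly_eq_prod (hD ▸ hSt ▸ hν) l
  have := mul_pos hνl (hj ▸ hw j)
  exact ⟨hbounds, by linarith [hbounds.1]⟩

/-- Eigenvalue bounds for the LVA-preconditioned matrix
`M = P^{-1/2}(W + Σ̃⁻¹)P^{-T/2}` with `P½ = Bᵀ D^{-1/2}`: for every `l`,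
`λ_l(Σ̃) minᵢ Wᵢᵢ + 1 ≤ λ_l(M) ≤ λ_l(Σ̃) maxᵢ Wᵢᵢ + 1`, and in particular
the smallest eigenvalue satisfies `λₙ(M) > 1` (indeed every eigenvalue exceeds `1`). -/
theorem lva_eigenvalue_bounds {n : ℕ}
    (B D W Sinv St Phalf M : Matrix (Fin n) (Fin n) ℝ)
    (d w : Fin n → ℝ) (hd : ∀ i, 0 < d i) (hw : ∀ i, 0 < w i)
    (hBlow : ∀ i j : Fin n, i < j → B i j = 0) (hBdiag : ∀ i, B i i = 1)
    (hBinv : IsUnit B.det)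
    (hD : D = Matrix.diagonal d) (hW : W = Matrix.diagonal w)
    (hSt : St = B⁻¹ * D * (B⁻¹)ᵀ)
    (hSinv : Sinv = Bᵀ * D⁻¹ * B)
    (hP : Phalf = Bᵀ * Matrix.diagonal (fun i => Real.sqrt ((d i)⁻¹)))
    (hM : M = Phalf⁻¹ * (W + Sinv) * (Phalf⁻¹)ᵀ)
    (μ ν : Fin n → ℝ) (hμa : Antitone μ) (hνa : Antitone ν)
    (hμ : M.charpoly = ∏ i : Fin n, (X - C (μ i)))
    (hν : St.charpoly = ∏ i : Fin n, (X - C (ν i))) :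
    ∀ l : Fin n,
      (ν l * (⨅ i, w i) + 1 ≤ μ l ∧ μ l ≤ ν l * (⨆ i, w i) + 1) ∧ 1 < μ l :=
  lva_eigenvalue_bounds_general B D W Sinv St Phalf M d w hd hw hBinv hD hW hSt hSinv hP hM μ ν hμa
    hνa hμ hν
end
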